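/- Let p : X → Y be a surjective G-equivariant map of finite G-sets, with twists e_X on X and e_Y on Y, and let S ∈ R_G(X×Y), M ∈ R_G(Y×X) be the associated split and merge, S(x,y) = δ_{p(x),y}·e_Y(y), M(y,x) = δ_{y,p(x)}·e_Y(y). Let t ∈ R_G(Y) and assume every value of t commutes in R with every value of e_X and of e_Y. Define t_Y ∈ R_G(Y×Y) by t_Y(y,y') = δ_{y,y'}·e_Y(y)·t(y), and t̃_X ∈ R_G(X×X) by t̃_X(x,x') = δ_{x,x'}·e_X(x)·t(p(x)). Then t_Y*M = M*t̃_X and S*t_Y = t̃_X*S (convolutions twisted by the twist of the middle set). -/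

import Mathlib

/-!
Each of the four twisted products collapses to a single term, and all four equal the merge
(resp. split) of `p` with the twist `y ↦ e_Y(y)·t(y)`. In `t̃_X * S` the term is the conjugate
`e_X(x)·t(p x)·e_X(x)⁻¹·e_Y(p x)`, which reduces to `e_Y·t` because `t` commutes with `e_X`
and `e_Y`.
-/

open Finset

/-- A `G`-equivariant function on a `G`-set. -/
def Equivariant1 (G : Type*) {X R : Type*} [SMul G X] [SMul G R] (e : X → R) : Prop :=
  ∀ (g : G) (x : X), e (g • x) = g • e x

/-- The split associated to `p : X → Y`: `S(x,y) = δ_{p(x),y}·e_Y(y)`. -/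
noncomputable def split {X Y R : Type*} [Ring R] [DecidableEq Y] (p : X → Y) (eY : Y → R) :
    X → Y → R :=
  fun x y => if p x = y then eY y else 0

/-- The merge associated to `p : X → Y`: `M(y,x) = δ_{y,p(x)}·e_Y(y)`. -/
noncomputable def merge {X Y R : Type*} [Ring R] [DecidableEq Y] (p : X → Y) (eY : Y → R) :
    Y → X → R :=
  fun y x => if y = p x then eY y else 0

/-- The diagonal element `t_Y(y,y') = δ_{y,y'}·e_Y(y)·t(y)` on `Y`. -/
noncomputable def diagY {Y R : Type*} [Ring R] [DecidableEq Y] (eY : Y → R) (t : Y → R) :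
    Y → Y → R :=
  fun y y' => if y = y' then eY y * t y else 0

/-- The diagonal element `t̃_X(x,x') = δ_{x,x'}·e_X(x)·t(p(x))` on `X`. -/
noncomputable def diagX {X Y R : Type*} [Ring R] [DecidableEq X] (p : X → Y)
    (eX : X → R) (t : Y → R) : X → X → R :=
  fun x x' => if x = x' then eX x * t (p x) else 0

noncomputable def twistedConv {X Y Z R : Type*} [Ring R] [Fintype Y] (e : Y → R)
    (f : X → Y → R) (g : Y → Z → R) : X → Z → R :=
  fun x z => ∑ y, f x y * Ring.inverse (e y) * g y z

section SplitMerge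

variable {X Y R : Type*} [Ring R] [DecidableEq Y] (p : X → Y) {eX : X → R} {eY : Y → R}
  (t : Y → R)

theorem twistedConv_diagY_merge [Fintype Y] (huY : ∀ y, IsUnit (eY y)) :
    twistedConv eY (diagY eY t) (merge p eY) = merge p (fun y => eY y * t y) := by
  ext y x
  simp only [twistedConv, diagY, ite_mul, zero_mul, sum_ite_eq, mem_univ, if_true]
  simp only [merge, mul_ite, mul_zero, Ring.inverse_mul_cancel_right _ _ (huY y)]

theorem twistedConv_merge_diagX [Fintype X] [DecidableEq X] (huX : ∀ x, IsUnit (eX x)) :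
    twistedConv eX (merge p eY) (diagX p eX t) = merge p (fun y => eY y * t y) := by
  ext y x
  simp only [twistedConv, diagX, merge, mul_ite, mul_zero, sum_ite_eq', mem_univ, if_true,
    ite_mul, zero_mul]
  split_ifs with h
  · rw [h, mul_assoc, Ring.inverse_mul_cancel_left _ _ (huX x)]
  · rfl

theorem twistedConv_split_diagY [Fintype Y] (huY : ∀ y, IsUnit (eY y)) :
    twistedConv eY (split p eY) (diagY eY t) = split p (fun y => eY y * t y) := by
  ext x y
  simp only [twistedConv, split, diagY, ite_mul, zero_mul, sum_ite_eq, mem_univ, if_true,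
    Ring.mul_inverse_cancel _ (huY _), one_mul]
  split_ifs with h
  · rw [h]
  · rfl

theorem twistedConv_diagX_split [Fintype X] [DecidableEq X] (huX : ∀ x, IsUnit (eX x))
    (htX : ∀ x, Commute (t (p x)) (eX x)) (htY : ∀ y, Commute (t y) (eY y)) :
    twistedConv eX (diagX p eX t) (split p eY) = split p (fun y => eY y * t y) := by
  ext x y
  simp only [twistedConv, split, diagX, ite_mul, zero_mul, sum_ite_eq, mem_univ, if_true]
  split_ifs with h
  · rw [← (htX x).eq, Ring.mul_inverse_cancel_right _ _ (huX x), h, (htY y).eq]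
  · rw [mul_zero]

end SplitMerge

theorem stmt4 {R X Y : Type*} [Ring R]
    [Fintype X] [DecidableEq X]
    [Fintype Y] [DecidableEq Y]
    (p : X → Y)
    (eX : X → R) (huX : ∀ x, IsUnit (eX x))
    (eY : Y → R) (huY : ∀ y, IsUnit (eY y))
    (t : Y → R)
    (htX : ∀ (y : Y) (x : X), t y * eX x = eX x * t y)
    (htY : ∀ (y y' : Y), t y * eY y' = eY y' * t y) :
    -- `t_Y * M = M * t̃_X` (middle twists `e_Y` resp. `e_X`)
    (∀ (y : Y) (x : X),
      (∑ y', diagY eY t y y' * Ring.inverse (eY y') * merge p eY y' x) =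
        (∑ x', merge p eY y x' * Ring.inverse (eX x') * diagX p eX t x' x)) ∧
    -- `S * t_Y = t̃_X * S` (middle twists `e_Y` resp. `e_X`)
    (∀ (x : X) (y : Y),
      (∑ y', split p eY x y' * Ring.inverse (eY y') * diagY eY t y' y) =
        (∑ x', diagX p eX t x x' * Ring.inverse (eX x') * split p eY x' y)) := by
  have hM :
      twistedConv eY (diagY eY t) (merge p eY) = twistedConv eX (merge p eY) (diagX p eX t) := by
    rw [twistedConv_diagY_merge p t huY, twistedConv_merge_diagX p t huX]
  have hS :
      twistedConv eY (split p eY) (diagY eY t) = twistedConv eX (diagX p eX t) (split p eY) := by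
    rw [twistedConv_split_diagY p t huY,
      twistedConv_diagX_split p t huX (fun x => htX (p x) x) (fun y => htY y y)]
  exact ⟨fun y x => congrFun (congrFun hM y) x, fun x y => congrFun (congrFun hS x) y⟩
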